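/- arXiv:2205.03198 — 2 statements merged into one kernel-verified Lean document; each statement's English description precedes it below -/
import Mathlib

section
/- Let k ∈ ℕ and let φ ∈ SL∪{*} and ψ ∈ SL. If φ ⊢_k ψ, then for every γ ∈ SL∪{*} there exists a tree T_k of depth k rooted in γ such that for each leaf α ∈ Le(T_k), if α ⊢_0 φ then α ⊢_0 ψ. -/
/-!
Common framework: Depth-Bounded Boolean Logics, depth-bounded trees/forests,
mass functions and depth-bounded belief functions.
-/

namespace DBB

/-- Sentences of a propositional language with propositional variables in `V`,
connectives ¬, ∧, ∨ and the constant ⊥. -/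
inductive Sentence (V : Type) : Type
  | var  : V → Sentence V
  | bot  : Sentence V
  | neg  : Sentence V → Sentence V
  | conj : Sentence V → Sentence V → Sentence V
  | disj : Sentence V → Sentence V → Sentence V
  deriving DecidableEq

variable {V : Type}

/-- Boolean evaluation of a sentence under a valuation of the variables. -/
def eval (v : V → Bool) : Sentence V → Bool
  | .var p => v p
  | .bot => false
  | .neg φ => !(eval v φ)
  | .conj φ ψ => eval v φ && eval v ψ
  | .disj φ ψ => eval v φ || eval v ψ

/-- Classical (semantic) consequence `Γ ⊢ φ`. -/
def CC (Γ : Set (Sentence V)) (φ : Sentence V) : Prop :=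
  ∀ v : V → Bool, (∀ γ ∈ Γ, eval v γ = true) → eval v φ = true

/-- The 0-depth consequence relation `Γ ⊢₀ φ`: closure of `Γ` under the standard
introduction and elimination rules for ¬, ∧, ∨, ⊥. -/
inductive Der0 : Set (Sentence V) → Sentence V → Prop
  | prem {Γ : Set (Sentence V)} {φ} (h : φ ∈ Γ) : Der0 Γ φ
  | andI {Γ φ ψ} : Der0 Γ φ → Der0 Γ ψ → Der0 Γ (.conj φ ψ)
  | andE1 {Γ φ ψ} : Der0 Γ (.conj φ ψ) → Der0 Γ φ
  | andE2 {Γ φ ψ} : Der0 Γ (.conj φ ψ) → Der0 Γ ψ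
  | orI1 {Γ φ ψ} : Der0 Γ φ → Der0 Γ (.disj φ ψ)
  | orI2 {Γ φ ψ} : Der0 Γ ψ → Der0 Γ (.disj φ ψ)
  | orE1 {Γ φ ψ} : Der0 Γ (.disj φ ψ) → Der0 Γ (.neg φ) → Der0 Γ ψ
  | orE2 {Γ φ ψ} : Der0 Γ (.disj φ ψ) → Der0 Γ (.neg ψ) → Der0 Γ φ
  | negAndI1 {Γ φ ψ} : Der0 Γ (.neg φ) → Der0 Γ (.neg (.conj φ ψ))
  | negAndI2 {Γ φ ψ} : Der0 Γ (.neg ψ) → Der0 Γ (.neg (.conj φ ψ))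
  | negAndE1 {Γ φ ψ} : Der0 Γ (.neg (.conj φ ψ)) → Der0 Γ φ → Der0 Γ (.neg ψ)
  | negAndE2 {Γ φ ψ} : Der0 Γ (.neg (.conj φ ψ)) → Der0 Γ ψ → Der0 Γ (.neg φ)
  | negOrI {Γ φ ψ} : Der0 Γ (.neg φ) → Der0 Γ (.neg ψ) → Der0 Γ (.neg (.disj φ ψ))
  | negOrE1 {Γ φ ψ} : Der0 Γ (.neg (.disj φ ψ)) → Der0 Γ (.neg φ)
  | negOrE2 {Γ φ ψ} : Der0 Γ (.neg (.disj φ ψ)) → Der0 Γ (.neg ψ)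
  | dnI {Γ φ} : Der0 Γ φ → Der0 Γ (.neg (.neg φ))
  | dnE {Γ φ} : Der0 Γ (.neg (.neg φ)) → Der0 Γ φ
  | botI {Γ φ} : Der0 Γ φ → Der0 Γ (.neg φ) → Der0 Γ .bot
  | botE {Γ φ} : Der0 Γ .bot → Der0 Γ φ

/-- The set of subsentences of a sentence. -/
def subs : Sentence V → Set (Sentence V)
  | .var p => {Sentence.var p}
  | .bot => {Sentence.bot}
  | .neg φ => insert (.neg φ) (subs φ)
  | .conj φ ψ => insert (.conj φ ψ) (subs φ ∪ subs ψ)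
  | .disj φ ψ => insert (.disj φ ψ) (subs φ ∪ subs ψ)

/-- Subsentences of a set of sentences. -/
def subsSet (Γ : Set (Sentence V)) : Set (Sentence V) := ⋃ γ ∈ Γ, subs γ

/-- The k-depth consequence relations `Γ ⊢ₖ φ`: for `k > 0`, `Γ ⊢ₖ φ` iff there is a
subsentence `β` of `Γ ∪ {φ}` such that `Γ, β ⊢_{k-1} φ` and `Γ, ¬β ⊢_{k-1} φ`. -/
def DerK : ℕ → Set (Sentence V) → Sentence V → Prop
  | 0, Γ, φ => Der0 Γ φ
  | k+1, Γ, φ => ∃ β, β ∈ subsSet (insert φ Γ) ∧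
      DerK k (insert β Γ) φ ∧ DerK k (insert (Sentence.neg β) Γ) φ

/-- Elements of `SL ∪ {*}`: `none` is the empty information `*`, `some γ` is the sentence `γ`.
`prems` gives the corresponding set of premises. -/
def prems : Option (Sentence V) → Set (Sentence V)
  | none => ∅
  | some γ => {γ}

/-- `r ⊢₀ φ` for `r ∈ SL ∪ {*}`. -/
def Der0O (r : Option (Sentence V)) (φ : Sentence V) : Prop := Der0 (prems r) φ

/-- `r ⊢ₖ φ` for `r ∈ SL ∪ {*}`. -/
def DerKO (k : ℕ) (r : Option (Sentence V)) (φ : Sentence V) : Prop := DerK k (prems r) φ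

/-- classical consequence from `r ∈ SL ∪ {*}`. -/
def CCO (r : Option (Sentence V)) (φ : Sentence V) : Prop := CC (prems r) φ

/-- `r ⊢₀ s` where also the conclusion may be the empty information `*`
(deriving `*` is trivial). -/
def Der0OO (r : Option (Sentence V)) : Option (Sentence V) → Prop
  | none => True
  | some φ => Der0O r φ

/-! ### Depth-bounded trees -/

/-- Binary trees whose internal nodes are labelled by the branching sentence `β`:
a node with branching sentence `β` and current information `α` has children carrying
the information `α ∧ β` and `α ∧ ¬β` respectively. -/
inductive DBTree (V : Type) : Type
  | leaf : DBTree V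
  | node : Sentence V → DBTree V → DBTree V → DBTree V
  deriving DecidableEq

/-- The information carried by a child of a node with information `r ∈ SL ∪ {*}` and
branching sentence `β`: `r ∧ β` (or just `β` when `r = *`). -/
def extend (r : Option (Sentence V)) (β : Sentence V) : Option (Sentence V) :=
  some (match r with
    | none => β
    | some α => Sentence.conj α β)

/-- The set `Le(T)` of labels of the leaves of a tree `t` rooted in `r ∈ SL ∪ {*}`. -/
def leafLabels [DecidableEq V] : Option (Sentence V) → DBTree V → Finset (Option (Sentence V))
  | r, .leaf => {r}
  | r, .node β t₁ t₂ =>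
      leafLabels (extend r β) t₁ ∪ leafLabels (extend r (.neg β)) t₂

/-- The number of leaves of a tree. -/
def numLeaves : DBTree V → ℕ
  | .leaf => 1
  | .node _ t₁ t₂ => numLeaves t₁ + numLeaves t₂

/-- `Grow k t t'`: `t'` is obtained from `t` by expanding a (possibly empty) subset of the
depth-`k` leaves of `t`, each expanded leaf getting two children via some branching sentence. -/
inductive Grow : ℕ → DBTree V → DBTree V → Prop
  | keep (k : ℕ) : Grow k .leaf .leaf
  | expand (β : Sentence V) : Grow 0 .leaf (.node β .leaf .leaf)
  | node {k : ℕ} {t₁ t₁' t₂ t₂' : DBTree V} (β : Sentence V) :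
      Grow k t₁ t₁' → Grow k t₂ t₂' →
      Grow (k+1) (.node β t₁ t₂) (.node β t₁' t₂')

/-- A depth-bounded tree sequence (DBT-sequence): `T₀` is a single node, and `T_{k+1}` is
obtained from `T_k` by branching at least one node of depth `k`. -/
structure DBTSeq (V : Type) where
  tree : ℕ → DBTree V
  init : tree 0 = DBTree.leaf
  grow : ∀ k, Grow k (tree k) (tree (k+1))
  progress : ∀ k, tree (k+1) ≠ tree k

/-- `t` is a tree of depth `k` belonging to some DBT-sequence. -/
def IsDepthKTree (k : ℕ) (t : DBTree V) : Prop := ∃ S : DBTSeq V, S.tree k = t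

/-- `r` decides `φ`: `r ⊢₀ φ` or `r ⊢₀ ¬φ`. -/
def Decides (r : Option (Sentence V)) (φ : Sentence V) : Prop :=
  Der0O r φ ∨ Der0O r (.neg φ)

/-- `|dec(Γ, φ)|`: the number of elements of `Γ` deciding `φ`. -/
noncomputable def decCount [DecidableEq V] (Γ : Finset (Option (Sentence V)))
    (φ : Sentence V) : ℕ := by
  classical exact (Γ.filter (fun α => Decides α φ)).card

/-- A tree rooted in `r` is `{φ}`-closed iff all its leaves decide `φ`. -/
def TreeClosed [DecidableEq V] (r : Option (Sentence V)) (t : DBTree V) (φ : Sentence V) : Prop :=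
  ∀ α ∈ leafLabels r t, Decides α φ

/-- A tree `t` of depth `k` rooted in `r` is `{φ}`-maximal iff no depth-`k` tree with the same
root has strictly more leaves deciding `φ`. -/
def TreeMaximal [DecidableEq V] (r : Option (Sentence V)) (k : ℕ) (t : DBTree V)
    (φ : Sentence V) : Prop :=
  ∀ t' : DBTree V, IsDepthKTree k t' →
    decCount (leafLabels r t') φ ≤ decCount (leafLabels r t) φ

/-- A tree rooted in `r` is free of deep contradictions iff every classically inconsistent
leaf is already 0-depth inconsistent. -/
def TreeFreeDC [DecidableEq V] (r : Option (Sentence V)) (t : DBTree V) : Prop :=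
  ∀ α ∈ leafLabels r t, CCO α Sentence.bot → Der0O α Sentence.bot

/-! ### Depth-bounded forests -/

/-- A depth-bounded forest sequence (DBF-sequence) based on the support set
`Supp ⊆ SL ∪ {*}`: a DBT-sequence rooted in `γ` for each `γ ∈ Supp`. -/
structure DBFSeq (V : Type) where
  Supp : Finset (Option (Sentence V))
  suppNE : Supp.Nonempty
  tree : Option (Sentence V) → ℕ → DBTree V
  init : ∀ γ ∈ Supp, tree γ 0 = DBTree.leaf
  grow : ∀ γ ∈ Supp, ∀ k, Grow k (tree γ k) (tree γ (k+1))
  progress : ∀ γ ∈ Supp, ∀ k, tree γ (k+1) ≠ tree γ k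

/-- `Le(F_k)`: the leaves of the depth-`k` forest of a DBF-sequence. -/
noncomputable def DBFSeq.leaves [DecidableEq V] (F : DBFSeq V) (k : ℕ) :
    Finset (Option (Sentence V)) := by
  classical exact F.Supp.biUnion (fun γ => leafLabels γ (F.tree γ k))

/-- The depth-`k` forest is `{φ}`-closed (tree-wise). -/
def DBFSeq.Closed [DecidableEq V] (F : DBFSeq V) (k : ℕ) (φ : Sentence V) : Prop :=
  ∀ γ ∈ F.Supp, TreeClosed γ (F.tree γ k) φ

/-- The depth-`k` forest is `{φ}`-maximal (tree-wise). -/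
def DBFSeq.Maximal [DecidableEq V] (F : DBFSeq V) (k : ℕ) (φ : Sentence V) : Prop :=
  ∀ γ ∈ F.Supp, TreeMaximal γ k (F.tree γ k) φ

/-- The depth-`k` forest is free of deep contradictions (tree-wise). -/
def DBFSeq.FreeDC [DecidableEq V] (F : DBFSeq V) (k : ℕ) : Prop :=
  ∀ γ ∈ F.Supp, TreeFreeDC γ (F.tree γ k)

/-- `MassStep m m' r t t'`: the mass function `m'` refines `m` along the expansion of `t`
into `t'` (leaves keep their mass; the mass of an expanded leaf is split among its
two children). -/
inductive MassStep (m m' : Option (Sentence V) → ℝ) :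
    Option (Sentence V) → DBTree V → DBTree V → Prop
  | keep {r : Option (Sentence V)} :
      m' r = m r → MassStep m m' r .leaf .leaf
  | split {r : Option (Sentence V)} {β : Sentence V} :
      m' (extend r β) + m' (extend r (.neg β)) = m r →
      MassStep m m' r .leaf (.node β .leaf .leaf)
  | node {r : Option (Sentence V)} {β : Sentence V} {t₁ t₁' t₂ t₂' : DBTree V} :
      MassStep m m' (extend r β) t₁ t₁' →
      MassStep m m' (extend r (.neg β)) t₂ t₂' →
      MassStep m m' r (.node β t₁ t₂) (.node β t₁' t₂')

/-- A depth-bounded mass sequence (DBM-sequence): a DBF-sequence free of deep contradictions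
together with probability mass functions `m_k` over `Le(F_k)` such that the mass of each leaf
of `F_k` is either kept (if it remains a leaf) or split among its two children in `F_{k+1}`. -/
structure DBMSeq (V : Type) [DecidableEq V] extends DBFSeq V where
  m : ℕ → Option (Sentence V) → ℝ
  nonneg : ∀ k, ∀ α ∈ toDBFSeq.leaves k, 0 ≤ m k α
  total : ∀ k, ∑ α ∈ toDBFSeq.leaves k, m k α = 1
  incZero : ∀ k, ∀ α ∈ toDBFSeq.leaves k, Der0O α Sentence.bot → m k α = 0
  freeDC : ∀ k, toDBFSeq.FreeDC k
  massStep : ∀ γ ∈ toDBFSeq.Supp, ∀ k,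
      MassStep (m k) (m (k+1)) γ (toDBFSeq.tree γ k) (toDBFSeq.tree γ (k+1))

/-- The k-depth belief function `B_k(φ) = m_k(b_k(φ))` where
`b_k(φ) = {α ∈ Le(F_k) : α ⊢₀ φ, α ⊬₀ ⊥}`. -/
noncomputable def DBMSeq.B [DecidableEq V] (M : DBMSeq V) (k : ℕ) (φ : Sentence V) : ℝ := by
  classical exact ∑ α ∈ M.toDBFSeq.leaves k,
    if Der0O α φ ∧ ¬ Der0O α Sentence.bot then M.m k α else 0

/-- The k-depth plausibility function `Pl_k(φ) = m_k(pl_k(φ))` where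
`pl_k(φ) = {α ∈ Le(F_k) : α ⊬₀ ¬φ}`. -/
noncomputable def DBMSeq.Pl [DecidableEq V] (M : DBMSeq V) (k : ℕ) (φ : Sentence V) : ℝ := by
  classical exact ∑ α ∈ M.toDBFSeq.leaves k,
    if ¬ Der0O α (Sentence.neg φ) then M.m k α else 0

/-! ### Auxiliary notions -/

/-- A probability function on `SL`: a `[0,1]`-valued function which is normalised on
classical tautologies and additive on classically incompatible disjuncts. -/
def IsProbability (P : Sentence V → ℝ) : Prop :=
  (∀ φ, 0 ≤ P φ ∧ P φ ≤ 1) ∧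
  (∀ φ, CC (∅ : Set (Sentence V)) φ → P φ = 1) ∧
  (∀ φ ψ, CC (∅ : Set (Sentence V)) (.neg (.conj φ ψ)) →
    P (.disj φ ψ) = P φ + P ψ)

/-- The literal on `p` prescribed by the valuation `v`. -/
def litOf (v : V → Bool) (p : V) : Sentence V :=
  if v p then .var p else .neg (.var p)

/-- Left-associated conjunction `φ ∧ ψ₁ ∧ ⋯ ∧ ψₙ`. -/
def listConj : Sentence V → List (Sentence V) → Sentence V
  | φ, [] => φ
  | φ, ψ :: l => listConj (.conj φ ψ) l

/-- Left-associated disjunction `φ ∨ ψ₁ ∨ ⋯ ∨ ψₙ`. -/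
def listDisj : Sentence V → List (Sentence V) → Sentence V
  | φ, [] => φ
  | φ, ψ :: l => listDisj (.disj φ ψ) l

/-- Conjunction of a list of sentences (`⊥` for the empty list, which is never used). -/
def conjList : List (Sentence V) → Sentence V
  | [] => .bot
  | ψ :: l => listConj ψ l

/-- Disjunction of a list of sentences (`⊥` for the empty list, which is never used). -/
def disjList : List (Sentence V) → Sentence V
  | [] => .bot
  | ψ :: l => listDisj ψ l

/-- `α` is an atom of the language: a maximal (classically consistent) conjunction of
literals, with exactly one literal per propositional variable. -/
def IsAtom (α : Sentence V) : Prop :=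
  ∃ (v : V → Bool) (l : List V), l.Nodup ∧ (∀ p : V, p ∈ l) ∧ l ≠ [] ∧
    α = conjList (l.map (litOf v))

/-- The conjunction `⋀_{i ∈ S} φ_i` of a finite set of indexed sentences. -/
def finsetConj {n : ℕ} (φ : Fin n → Sentence V) (S : Finset (Fin n)) : Sentence V :=
  conjList ((S.sort (· ≤ ·)).map φ)

/-- The finite set of subsentences of a sentence. -/
def subsF [DecidableEq V] : Sentence V → Finset (Sentence V)
  | .var p => {Sentence.var p}
  | .bot => {Sentence.bot}
  | .neg φ => insert (.neg φ) (subsF φ)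
  | .conj φ ψ => insert (.conj φ ψ) (subsF φ ∪ subsF ψ)
  | .disj φ ψ => insert (.disj φ ψ) (subsF φ ∪ subsF ψ)

/-- All branching sentences of the tree belong to `S`. -/
def BranchesIn [DecidableEq V] : DBTree V → Finset (Sentence V) → Prop
  | .leaf, _ => True
  | .node β t₁ t₂, S => β ∈ S ∧ BranchesIn t₁ S ∧ BranchesIn t₂ S


section Aux

variable {V : Type}

/-- Cut for `Der0`. -/
lemma der0_cut {Γ Δ : Set (Sentence V)} {ψ : Sentence V}
    (h : Der0 Γ ψ) (hs : ∀ δ ∈ Γ, Der0 Δ δ) : Der0 Δ ψ := by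
  induction h with
  | prem h => exact hs _ h
  | andI _ _ ih1 ih2 => exact .andI ih1 ih2
  | andE1 _ ih => exact .andE1 ih
  | andE2 _ ih => exact .andE2 ih
  | orI1 _ ih => exact .orI1 ih
  | orI2 _ ih => exact .orI2 ih
  | orE1 _ _ ih1 ih2 => exact .orE1 ih1 ih2
  | orE2 _ _ ih1 ih2 => exact .orE2 ih1 ih2
  | negAndI1 _ ih => exact .negAndI1 ih
  | negAndI2 _ ih => exact .negAndI2 ih
  | negAndE1 _ _ ih1 ih2 => exact .negAndE1 ih1 ih2
  | negAndE2 _ _ ih1 ih2 => exact .negAndE2 ih1 ih2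
  | negOrI _ _ ih1 ih2 => exact .negOrI ih1 ih2
  | negOrE1 _ ih => exact .negOrE1 ih
  | negOrE2 _ ih => exact .negOrE2 ih
  | dnI _ ih => exact .dnI ih
  | dnE _ ih => exact .dnE ih
  | botI _ _ ih1 ih2 => exact .botI ih1 ih2
  | botE _ ih => exact .botE ih

/-- The full binary tree of depth `n` (all branchings on `⊥`). -/
def fullTree (V : Type) : ℕ → DBTree V
  | 0 => .leaf
  | n+1 => .node .bot (fullTree V n) (fullTree V n)

lemma grow_fullTree : ∀ n : ℕ, Grow n (fullTree V n) (fullTree V (n+1))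
  | 0 => Grow.expand .bot
  | n+1 => Grow.node .bot (grow_fullTree n) (grow_fullTree n)

lemma fullTree_ne : ∀ n : ℕ, fullTree V (n+1) ≠ fullTree V n
  | 0 => by simp [fullTree]
  | n+1 => by
    intro h
    simp only [fullTree, DBTree.node.injEq] at h
    exact fullTree_ne n h.2.1

/-- The full DBT-sequence. -/
def fullSeq (V : Type) : DBTSeq V where
  tree := fullTree V
  init := rfl
  grow := grow_fullTree
  progress := fullTree_ne

lemma isDepthKTree_leaf : IsDepthKTree 0 (DBTree.leaf : DBTree V) :=
  ⟨fullSeq V, rfl⟩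

/-- Combining two depth-`k` trees into a depth-`k+1` tree. -/
lemma isDepthKTree_node {k : ℕ} {t₁ t₂ : DBTree V} (β : Sentence V)
    (h₁ : IsDepthKTree k t₁) (h₂ : IsDepthKTree k t₂) :
    IsDepthKTree (k+1) (.node β t₁ t₂) := by
  obtain ⟨S₁, hS₁⟩ := h₁
  obtain ⟨S₂, hS₂⟩ := h₂
  refine ⟨⟨fun n => match n with
    | 0 => .leaf
    | n+1 => .node β (S₁.tree n) (S₂.tree n), rfl, ?_, ?_⟩, ?_⟩
  · intro n
    match n with
    | 0 =>
      simp only [S₁.init, S₂.init]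
      exact Grow.expand β
    | n+1 => exact Grow.node β (S₁.grow n) (S₂.grow n)
  · intro n
    match n with
    | 0 => simp
    | n+1 =>
      intro h
      simp only [DBTree.node.injEq] at h
      exact S₁.progress n h.2.1
  · simp [hS₁, hS₂]

lemma der0OO_of_extend {α : Option (Sentence V)} {r : Option (Sentence V)} {β : Sentence V}
    (h : Der0OO α (extend r β)) : Der0OO α r := by
  match r with
  | none => trivial
  | some σ => exact Der0.andE1 h

lemma der0_beta_of_extend {α : Option (Sentence V)} {r : Option (Sentence V)} {β : Sentence V}
    (h : Der0OO α (extend r β)) : Der0 (prems α) β := by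
  match r with
  | none => exact h
  | some σ => exact Der0.andE2 h

lemma leaf_der0_root [DecidableEq V] :
    ∀ (t : DBTree V) (r α : Option (Sentence V)), α ∈ leafLabels r t → Der0OO α r := by
  intro t
  induction t with
  | leaf =>
    intro r α h
    simp only [leafLabels, Finset.mem_singleton] at h
    subst h
    match α with
    | none => trivial
    | some σ => exact Der0.prem rfl
  | node β t₁ t₂ ih₁ ih₂ =>
    intro r α h
    simp only [leafLabels, Finset.mem_union] at h
    rcases h with h | h
    · exact der0OO_of_extend (ih₁ _ _ h)
    · exact der0OO_of_extend (ih₂ _ _ h)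

lemma derK_yields_tree_aux [DecidableEq V] :
    ∀ (k : ℕ) (Γ : Set (Sentence V)) (ψ : Sentence V), DerK k Γ ψ →
    ∀ γ : Option (Sentence V), ∃ t : DBTree V, IsDepthKTree k t ∧
      ∀ α ∈ leafLabels γ t, (∀ δ ∈ Γ, Der0 (prems α) δ) → Der0 (prems α) ψ := by
  intro k
  induction k with
  | zero =>
    intro Γ ψ h γ
    refine ⟨.leaf, isDepthKTree_leaf, ?_⟩
    intro α hα hΓ
    simp only [leafLabels, Finset.mem_singleton] at hα
    exact der0_cut h hΓ
  | succ k ih =>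
    intro Γ ψ h γ
    obtain ⟨β, -, h1, h2⟩ := h
    obtain ⟨t₁, hd₁, hp₁⟩ := ih _ _ h1 (extend γ β)
    obtain ⟨t₂, hd₂, hp₂⟩ := ih _ _ h2 (extend γ (.neg β))
    refine ⟨.node β t₁ t₂, isDepthKTree_node β hd₁ hd₂, ?_⟩
    intro α hα hΓ
    simp only [leafLabels, Finset.mem_union] at hα
    rcases hα with hα | hα
    · refine hp₁ α hα ?_
      intro δ hδ
      rcases hδ with h | h
      · exact h ▸ der0_beta_of_extend (leaf_der0_root t₁ _ α hα)
      · exact hΓ δ h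
    · refine hp₂ α hα ?_
      intro δ hδ
      rcases hδ with h | h
      · exact h ▸ der0_beta_of_extend (leaf_der0_root t₂ _ α hα)
      · exact hΓ δ h

end Aux

/-- If `φ ⊢ₖ ψ` (`φ ∈ SL ∪ {*}`, `ψ ∈ SL`), then for every `γ ∈ SL ∪ {*}`
there exists a tree `T_k` of depth `k` rooted in `γ` such that for each leaf `α ∈ Le(T_k)`,
if `α ⊢₀ φ` then `α ⊢₀ ψ`. -/
theorem derK_yields_tree_any_root {V : Type} [DecidableEq V] [Fintype V]
    (k : ℕ) (φ : Option (Sentence V)) (ψ : Sentence V)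
    (h : DerKO k φ ψ) :
    ∀ γ : Option (Sentence V), ∃ t : DBTree V, IsDepthKTree k t ∧
      ∀ α ∈ leafLabels γ t, Der0OO α φ → Der0O α ψ := by
  intro γ
  obtain ⟨t, ht, hp⟩ := derK_yields_tree_aux k (prems φ) ψ h γ
  refine ⟨t, ht, ?_⟩
  intro α hα hφ
  refine hp α hα ?_
  intro δ hδ
  match φ with
  | none => exact absurd hδ (by simp [prems])
  | some σ =>
    have : δ = σ := hδ
    exact this ▸ hφ

end DBB
end

section
/- Let k ∈ ℕ, let φ, ψ ∈ SL, and suppose φ ⊢_k ψ. Then for every {¬φ∨ψ}-maximal tree T_{k+1} of depth k+1 rooted in any sentence γ and free of deep contradictions, every leaf α ∈ Le(T_{k+1}) with α ⊢_0 φ satisfies α ⊢_0 ψ. -/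
/-!
Common framework: Depth-Bounded Boolean Logics, depth-bounded trees/forests,
mass functions and depth-bounded belief functions.
-/

namespace DBB

variable {V : Type}

/-! ### Auxiliary lemmas for Statement 3 -/

section Statement3Aux

variable {V : Type}

/-- Cut/transitivity for `Der0`. -/
theorem Der0.cut {Γ Δ : Set (Sentence V)} {φ : Sentence V}
    (h : Der0 Γ φ) (hΔ : ∀ g ∈ Γ, Der0 Δ g) : Der0 Δ φ := by
  induction h with
  | prem h => exact hΔ _ h
  | andI _ _ ih1 ih2 => exact .andI ih1 ih2
  | andE1 _ ih => exact .andE1 ih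
  | andE2 _ ih => exact .andE2 ih
  | orI1 _ ih => exact .orI1 ih
  | orI2 _ ih => exact .orI2 ih
  | orE1 _ _ ih1 ih2 => exact .orE1 ih1 ih2
  | orE2 _ _ ih1 ih2 => exact .orE2 ih1 ih2
  | negAndI1 _ ih => exact .negAndI1 ih
  | negAndI2 _ ih => exact .negAndI2 ih
  | negAndE1 _ _ ih1 ih2 => exact .negAndE1 ih1 ih2
  | negAndE2 _ _ ih1 ih2 => exact .negAndE2 ih1 ih2
  | negOrI _ _ ih1 ih2 => exact .negOrI ih1 ih2
  | negOrE1 _ ih => exact .negOrE1 ih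
  | negOrE2 _ ih => exact .negOrE2 ih
  | dnI _ ih => exact .dnI ih
  | dnE _ ih => exact .dnE ih
  | botI _ _ ih1 ih2 => exact .botI ih1 ih2
  | botE _ ih => exact .botE ih

/-- Soundness of `Der0`. -/
theorem Der0.sound {Γ : Set (Sentence V)} {φ : Sentence V} (h : Der0 Γ φ) : CC Γ φ := by
  induction h with
  | prem h => exact fun v hv => hv _ h
  | andI _ _ ih1 ih2 =>
    intro v hv
    have h1 := ih1 v hv
    have h2 := ih2 v hv
    simp [eval, h1, h2]
  | andE1 _ ih =>
    intro v hv
    have h1 := ih v hv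
    simp [eval] at h1
    exact h1.1
  | andE2 _ ih =>
    intro v hv
    have h1 := ih v hv
    simp [eval] at h1
    exact h1.2
  | orI1 _ ih =>
    intro v hv
    have h1 := ih v hv
    simp [eval, h1]
  | orI2 _ ih =>
    intro v hv
    have h1 := ih v hv
    simp [eval, h1]
  | orE1 _ _ ih1 ih2 =>
    intro v hv
    have h1 := ih1 v hv
    have h2 := ih2 v hv
    simp [eval] at h1 h2
    simp [h2] at h1
    exact h1
  | orE2 _ _ ih1 ih2 =>
    intro v hv
    have h1 := ih1 v hv
    have h2 := ih2 v hv
    simp [eval] at h1 h2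
    simp [h2] at h1
    exact h1
  | negAndI1 _ ih =>
    intro v hv
    have h1 := ih v hv
    simp [eval] at h1 ⊢
    simp [h1]
  | negAndI2 _ ih =>
    intro v hv
    have h1 := ih v hv
    simp [eval] at h1 ⊢
    simp [h1]
  | negAndE1 _ _ ih1 ih2 =>
    intro v hv
    have h1 := ih1 v hv
    have h2 := ih2 v hv
    simp [eval] at h1 h2 ⊢
    simp_all
  | negAndE2 _ _ ih1 ih2 =>
    intro v hv
    have h1 := ih1 v hv
    have h2 := ih2 v hv
    simp [eval] at h1 h2 ⊢
    simp_all
  | negOrI _ _ ih1 ih2 =>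
    intro v hv
    have h1 := ih1 v hv
    have h2 := ih2 v hv
    simp [eval] at h1 h2 ⊢
    simp [h1, h2]
  | negOrE1 _ ih =>
    intro v hv
    have h1 := ih v hv
    simp [eval] at h1 ⊢
    exact h1.1
  | negOrE2 _ ih =>
    intro v hv
    have h1 := ih v hv
    simp [eval] at h1 ⊢
    exact h1.2
  | dnI _ ih =>
    intro v hv
    have h1 := ih v hv
    simp [eval, h1]
  | dnE _ ih =>
    intro v hv
    have h1 := ih v hv
    simp [eval] at h1
    exact h1
  | botI _ _ ih1 ih2 =>
    intro v hv
    have h1 := ih1 v hv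
    have h2 := ih2 v hv
    simp [eval, h1] at h2
  | botE _ ih =>
    intro v hv
    have h1 := ih v hv
    simp [eval] at h1

/-- Soundness of `DerK`. -/
theorem DerK.sound {k : ℕ} {Γ : Set (Sentence V)} {φ : Sentence V}
    (h : DerK k Γ φ) : CC Γ φ := by
  induction k generalizing Γ φ with
  | zero => exact Der0.sound h
  | succ k ih =>
    obtain ⟨β, -, h1, h2⟩ := h
    intro v hv
    by_cases hb : eval v β = true
    · exact ih h1 v (by
        intro g hg
        rcases Set.mem_insert_iff.mp hg with rfl | hg
        · exact hb
        · exact hv _ hg)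
    · exact ih h2 v (by
        intro g hg
        rcases Set.mem_insert_iff.mp hg with rfl | hg
        · simp [eval, hb]
        · exact hv _ hg)

/-- Size of a sentence. -/
def sz : Sentence V → ℕ
  | .var _ => 1
  | .bot => 1
  | .neg a => sz a + 1
  | .conj a b => sz a + sz b + 1
  | .disj a b => sz a + sz b + 1

/-- `a` is a left-nested "conjunction prefix" of `b`. -/
inductive Pref : Sentence V → Sentence V → Prop
  | refl (a : Sentence V) : Pref a a
  | step {a b : Sentence V} (c : Sentence V) : Pref a b → Pref a (.conj b c)

theorem Pref.sz_le {a b : Sentence V} (h : Pref a b) : sz a ≤ sz b := by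
  induction h with
  | refl => exact le_refl _
  | step c _ ih => simp only [sz]; omega

theorem Pref.trans {a b c : Sentence V} (h1 : Pref a b) (h2 : Pref b c) : Pref a c := by
  induction h2 with
  | refl => exact h1
  | step c _ ih => exact .step c ih

theorem Pref.total {a b c : Sentence V} (h1 : Pref a c) (h2 : Pref b c) :
    Pref a b ∨ Pref b a := by
  induction h1 with
  | refl => exact Or.inr h2
  | step c h ih =>
    cases h2 with
    | refl => exact Or.inl (.step _ h)
    | step _ h' => exact ih h'

theorem pref_no_both {a β x : Sentence V}
    (h1 : Pref (.conj a β) x) (h2 : Pref (.conj a (.neg β)) x) : False := by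
  rcases Pref.total h1 h2 with h | h
  · cases h with
    | step _ h' =>
      have := h'.sz_le
      simp [sz] at this
  · cases h with
    | step _ h' =>
      have := h'.sz_le
      simp [sz] at this

variable [DecidableEq V]

theorem leaf_pref : ∀ (t : DBTree V) (a : Sentence V),
    ∀ l ∈ leafLabels (some a) t, ∃ b, l = some b ∧ Pref a b := by
  intro t
  induction t with
  | leaf =>
    intro a l hl
    simp only [leafLabels, Finset.mem_singleton] at hl
    exact ⟨a, hl, .refl a⟩
  | node β t1 t2 ih1 ih2 =>
    intro a l hl
    rcases Finset.mem_union.mp hl with h | h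
    · obtain ⟨b, rfl, hb⟩ := ih1 (.conj a β) l h
      exact ⟨b, rfl, Pref.trans (.step _ (.refl a)) hb⟩
    · obtain ⟨b, rfl, hb⟩ := ih2 (.conj a (.neg β)) l h
      exact ⟨b, rfl, Pref.trans (.step _ (.refl a)) hb⟩

theorem leafLabels_disjoint {a β : Sentence V} (t1 t2 : DBTree V) :
    Disjoint (leafLabels (some (.conj a β)) t1)
      (leafLabels (some (.conj a (.neg β))) t2) := by
  rw [Finset.disjoint_left]
  intro l h1 h2
  obtain ⟨b, rfl, hb1⟩ := leaf_pref t1 _ l h1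
  obtain ⟨b', hb', hb2⟩ := leaf_pref t2 _ (some b) h2
  cases Option.some.inj hb'
  exact pref_no_both hb1 hb2

theorem card_leafLabels : ∀ (t : DBTree V) (a : Sentence V),
    (leafLabels (some a) t).card = numLeaves t := by
  intro t
  induction t with
  | leaf => intro a; rfl
  | node β t1 t2 ih1 ih2 =>
    intro a
    show (leafLabels (some (.conj a β)) t1 ∪ leafLabels (some (.conj a (.neg β))) t2).card = _
    rw [Finset.card_union_of_disjoint (leafLabels_disjoint t1 t2), ih1, ih2]
    rfl

/-- Every leaf of a tree rooted in `a` 0-derives whatever `a` 0-derives. -/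
theorem leaf_der0 : ∀ (t : DBTree V) (a δ : Sentence V),
    Der0 ({a} : Set (Sentence V)) δ → ∀ l ∈ leafLabels (some a) t, Der0O l δ := by
  intro t
  induction t with
  | leaf =>
    intro a δ h l hl
    simp only [leafLabels, Finset.mem_singleton] at hl
    subst hl
    exact h
  | node β t1 t2 ih1 ih2 =>
    intro a δ h l hl
    rcases Finset.mem_union.mp hl with h1 | h1
    · refine ih1 (.conj a β) δ (h.cut ?_) l h1
      intro g hg
      rw [Set.mem_singleton_iff] at hg; subst hg
      exact Der0.andE1 (.prem rfl)
    · refine ih2 (.conj a (.neg β)) δ (h.cut ?_) l h1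
      intro g hg
      rw [Set.mem_singleton_iff] at hg; subst hg
      exact Der0.andE1 (.prem rfl)

/-- Perfect binary trees of a given depth. -/
inductive PerfectT : ℕ → DBTree V → Prop
  | leaf : PerfectT 0 .leaf
  | node {n : ℕ} {t1 t2 : DBTree V} (β : Sentence V) :
      PerfectT n t1 → PerfectT n t2 → PerfectT (n+1) (.node β t1 t2)

/-- Pad/truncate a tree to a perfect tree of depth `j`. -/
def padTree : ℕ → DBTree V → DBTree V
  | 0, _ => .leaf
  | j+1, .leaf => .node .bot (padTree j .leaf) (padTree j .leaf)
  | j+1, .node β t1 t2 => .node β (padTree j t1) (padTree j t2)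

theorem grow_pad : ∀ (j : ℕ) (t : DBTree V), Grow j (padTree j t) (padTree (j+1) t) := by
  intro j
  induction j with
  | zero => intro t; cases t <;> exact Grow.expand _
  | succ j ih => intro t; cases t <;> exact Grow.node _ (ih _) (ih _)

theorem numLeaves_pad : ∀ (j : ℕ) (t : DBTree V), numLeaves (padTree j t) = 2 ^ j := by
  intro j
  induction j with
  | zero => intro t; rfl
  | succ j ih =>
    intro t
    cases t <;> simp [padTree, numLeaves, ih] <;> ring

theorem perfect_pad (j : ℕ) (t : DBTree V) : PerfectT j (padTree j t) := by
  induction j generalizing t with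
  | zero => exact .leaf
  | succ j ih => cases t <;> exact .node _ (ih _) (ih _)

theorem pad_eq_of_perfect {n : ℕ} {t : DBTree V} (h : PerfectT n t) : padTree n t = t := by
  induction h with
  | leaf => rfl
  | node β h1 h2 ih1 ih2 => show DBTree.node β _ _ = _; rw [ih1, ih2]

theorem numLeaves_of_perfect {n : ℕ} {t : DBTree V} (h : PerfectT n t) :
    numLeaves t = 2 ^ n := by
  rw [← pad_eq_of_perfect h, numLeaves_pad]

theorem isDepthKTree_of_perfect {n : ℕ} {t : DBTree V} (h : PerfectT n t) :
    IsDepthKTree n t := by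
  refine ⟨⟨fun j => padTree j t, rfl, fun k => grow_pad k t, fun k => ?_⟩,
    pad_eq_of_perfect h⟩
  intro heq
  have := congrArg numLeaves heq
  rw [numLeaves_pad, numLeaves_pad] at this
  have h2 : (2:ℕ) ^ k < 2 ^ (k+1) := by
    exact Nat.pow_lt_pow_right (by norm_num) (Nat.lt_succ_self k)
  omega

theorem Grow.numLeaves_le {j : ℕ} {t t' : DBTree V} (h : Grow j t t') :
    numLeaves t' ≤ 2 * numLeaves t := by
  induction h with
  | keep => simp [numLeaves]
  | expand => simp [numLeaves]
  | node β _ _ ih1 ih2 => show numLeaves _ + numLeaves _ ≤ _; simp [numLeaves]; omega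

theorem numLeaves_le_of_depthK {n : ℕ} {t : DBTree V} (h : IsDepthKTree n t) :
    numLeaves t ≤ 2 ^ n := by
  obtain ⟨S, rfl⟩ := h
  induction n with
  | zero => rw [S.init]; exact le_refl _
  | succ n ih =>
    have := (S.grow n).numLeaves_le
    have h2 : (2:ℕ) ^ (n+1) = 2 * 2 ^ n := by ring
    omega

/-- Main construction: from a depth-`k` derivation, build a perfect depth-`k` tree all
of whose leaves 0-derive the conclusion. -/
theorem derK_tree : ∀ (k : ℕ) (Γ : Set (Sentence V)) (ψ0 : Sentence V), DerK k Γ ψ0 →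
    ∀ a : Sentence V, (∀ g ∈ Γ, Der0 ({a} : Set (Sentence V)) g) →
    ∃ t : DBTree V, PerfectT k t ∧ ∀ l ∈ leafLabels (some a) t, Der0O l ψ0 := by
  intro k
  induction k with
  | zero =>
    intro Γ ψ0 h a ha
    refine ⟨.leaf, .leaf, ?_⟩
    intro l hl
    simp only [leafLabels, Finset.mem_singleton] at hl
    subst hl
    exact Der0.cut h ha
  | succ k ih =>
    intro Γ ψ0 h a ha
    obtain ⟨β, -, h1, h2⟩ := h
    obtain ⟨t1, hp1, hl1⟩ := ih (insert β Γ) ψ0 h1 (.conj a β) (by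
      intro g hg
      rcases Set.mem_insert_iff.mp hg with rfl | hg
      · exact Der0.andE2 (.prem rfl)
      · refine (ha g hg).cut ?_
        intro x hx
        rw [Set.mem_singleton_iff] at hx; subst hx
        exact Der0.andE1 (.prem rfl))
    obtain ⟨t2, hp2, hl2⟩ := ih (insert (.neg β) Γ) ψ0 h2 (.conj a (.neg β)) (by
      intro g hg
      rcases Set.mem_insert_iff.mp hg with rfl | hg
      · exact Der0.andE2 (.prem rfl)
      · refine (ha g hg).cut ?_
        intro x hx
        rw [Set.mem_singleton_iff] at hx; subst hx
        exact Der0.andE1 (.prem rfl))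
    refine ⟨.node β t1 t2, .node β hp1 hp2, ?_⟩
    intro l hl
    rcases Finset.mem_union.mp hl with hm | hm
    · exact hl1 l hm
    · exact hl2 l hm

/-- `decCount` bounds. -/
theorem decCount_eq_card_of_all {Γ : Finset (Option (Sentence V))} {φ : Sentence V}
    (h : ∀ α ∈ Γ, Decides α φ) : decCount Γ φ = Γ.card := by
  classical
  unfold decCount
  congr 1
  exact Finset.filter_true_of_mem h

theorem decCount_lt_card {Γ : Finset (Option (Sentence V))} {φ : Sentence V}
    {α : Option (Sentence V)} (hmem : α ∈ Γ) (hnd : ¬ Decides α φ) :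
    decCount Γ φ < Γ.card := by
  classical
  unfold decCount
  refine Finset.card_lt_card ?_
  refine ⟨Finset.filter_subset _ _, fun hsub => hnd ?_⟩
  exact (Finset.mem_filter.mp (hsub hmem)).2

end Statement3Aux


/-- Suppose `φ ⊢ₖ ψ`. Then for every `{¬φ ∨ ψ}`-maximal tree `T_{k+1}` of depth
`k+1` rooted in any sentence `γ` and free of deep contradictions, every leaf `α ∈ Le(T_{k+1})`
with `α ⊢₀ φ` satisfies `α ⊢₀ ψ`. -/
theorem maximal_tree_conditional {V : Type} [DecidableEq V] [Fintype V]
    (k : ℕ) (φ ψ γ : Sentence V) (h : DerK k {φ} ψ)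
    (t : DBTree V) (ht : IsDepthKTree (k+1) t)
    (hmax : TreeMaximal (some γ) (k+1) t (.disj (.neg φ) ψ))
    (hfree : TreeFreeDC (some γ) t) :
    ∀ α ∈ leafLabels (some γ) t, Der0O α φ → Der0O α ψ := by
  intro α hα hφ0
  by_cases hd : Decides α (Sentence.disj (.neg φ) ψ)
  · rcases hd with hpos | hneg
    · -- α ⊢₀ ¬φ ∨ ψ together with α ⊢₀ φ gives α ⊢₀ ψ
      exact Der0.orE1 hpos (Der0.dnI hφ0)
    · -- α ⊢₀ ¬(¬φ ∨ ψ) gives α ⊢₀ ¬ψ, so α is classically inconsistent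
      have hnψ : Der0O α (.neg ψ) := Der0.negOrE2 hneg
      have hcc : CCO α .bot := by
        intro v hv
        have h1 := Der0.sound hφ0 v hv
        have h2 := Der0.sound hnψ v hv
        have h3 : eval v ψ = true := by
          refine DerK.sound h v ?_
          intro g hg
          rw [Set.mem_singleton_iff] at hg
          subst hg
          exact h1
        simp [eval, h3] at h2
      exact Der0.botE (hfree α hα hcc)
  · -- α does not decide ¬φ ∨ ψ: contradiction with maximality
    exfalso
    obtain ⟨t1, hp1, hl1⟩ := derK_tree k {φ} ψ h (Sentence.conj γ φ) (by
      intro g hg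
      rw [Set.mem_singleton_iff] at hg
      subst hg
      exact Der0.andE2 (.prem rfl))
    have hp2 : PerfectT k (padTree k (.leaf : DBTree V)) := perfect_pad k _
    have hperf : PerfectT (k+1) (DBTree.node φ t1 (padTree k .leaf)) :=
      .node φ hp1 hp2
    have hdk : IsDepthKTree (k+1) (DBTree.node φ t1 (padTree k .leaf)) :=
      isDepthKTree_of_perfect hperf
    have hall : ∀ l ∈ leafLabels (some γ) (DBTree.node φ t1 (padTree k .leaf)),
        Decides l (Sentence.disj (.neg φ) ψ) := by
      intro l hl
      rcases Finset.mem_union.mp hl with h1 | h1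
      · exact Or.inl (Der0.orI2 (hl1 l h1))
      · exact Or.inl (leaf_der0 _ _ _ (Der0.orI1 (Der0.andE2 (.prem rfl))) l h1)
    have hcard1 : decCount (leafLabels (some γ) (DBTree.node φ t1 (padTree k .leaf)))
        (Sentence.disj (.neg φ) ψ) = 2 ^ (k+1) := by
      rw [decCount_eq_card_of_all hall, card_leafLabels]
      exact numLeaves_of_perfect hperf
    have hle := hmax _ hdk
    rw [hcard1] at hle
    have hlt : decCount (leafLabels (some γ) t) (Sentence.disj (.neg φ) ψ)
        < numLeaves t := by
      rw [← card_leafLabels t γ]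
      exact decCount_lt_card hα hd
    have hnt : numLeaves t ≤ 2 ^ (k+1) := numLeaves_le_of_depthK ht
    omega


end DBB
end
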